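/- For every real τ with 0 < τ ≤ 1/4, there exists exactly one complex number z satisfying |z − iτ/2| < τ/10 and P(z,τ) = 0. -/

import Mathlib

/-!
Multiplying by `iτ²` gives `iτ² P(z,τ) = (z - iτ/2)(z + iτ/2) - τ² Q(z)` with a cubic `Q`
independent of `τ` and vanishing at `0`. Hence, away from `z = -iτ/2`, the roots of `P(·,τ)` are
the fixed points of `z ↦ iτ/2 + τ² Q(z) / (z + iτ/2)`. On the closed disc of radius `τ/10` about
`iτ/2` the correction term is `O(τ²)` with Lipschitz constant `O(τ)`, so for `τ ≤ 1/4` this map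
sends the disc into its interior and is a `1/2`-contraction; Banach's fixed point theorem gives
exactly one root in the open disc.
-/

open Real Complex

noncomputable def Ppoly (τ : ℝ) (z : ℂ) : ℂ :=
  z ^ 3 + (Complex.I - 1 / (4 * (π : ℂ)) - Complex.I / (τ : ℂ) ^ 2) * z ^ 2
    - z / 4 - Complex.I / 4

open Metric Set NNReal

theorem existsUnique_fixedPoint_mem_ball {E : Type*} [MetricSpace E] [CompleteSpace E]
    {F : E → E} {c : E} {r : ℝ} {K : ℝ≥0} (hr : 0 ≤ r) (hK : K < 1)
    (hmaps : MapsTo F (closedBall c r) (ball c r))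
    (hlip : LipschitzOnWith K F (closedBall c r)) :
    ∃! z, z ∈ ball c r ∧ F z = z := by
  have hself : MapsTo F (closedBall c r) (closedBall c r) :=
    hmaps.mono_right ball_subset_closedBall
  have hcontr : ContractingWith K (hself.restrict F _ _) :=
    ⟨hK, hself.lipschitzOnWith_iff_restrict.1 hlip⟩
  obtain ⟨z, hz, hfix, -⟩ := hcontr.exists_fixedPoint' isClosed_closedBall.isComplete hself
    (mem_closedBall_self hr) (edist_ne_top _ _)
  refine ⟨z, ⟨hfix ▸ hmaps hz, hfix⟩, fun w ⟨hw, hwfix⟩ => ?_⟩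
  exact Subtype.ext_iff.1 <| hcontr.fixedPoint_unique' (x := ⟨w, ball_subset_closedBall hw⟩)
    (y := ⟨z, hz⟩) (Subtype.ext hwfix) (Subtype.ext hfix)

noncomputable def Qpoly (z : ℂ) : ℂ :=
  -I * z ^ 3 + (1 + I / (4 * π)) * z ^ 2 + I * z / 4

noncomputable def rootMap (τ : ℝ) (z : ℂ) : ℂ :=
  I * τ / 2 + τ ^ 2 * Qpoly z / (z + I * τ / 2)

theorem I_mul_sq_mul_Ppoly {τ : ℝ} (hτ : τ ≠ 0) (z : ℂ) :
    I * τ ^ 2 * Ppoly τ z = (z - I * τ / 2) * (z + I * τ / 2) - τ ^ 2 * Qpoly z := by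
  have hτ' : (τ : ℂ) ≠ 0 := ofReal_ne_zero.2 hτ
  have hπ : (π : ℂ) ≠ 0 := ofReal_ne_zero.2 pi_ne_zero
  simp only [Ppoly, Qpoly]
  field_simp
  ring_nf
  simp only [I_sq]
  ring

theorem Ppoly_eq_zero_iff_rootMap_eq {τ : ℝ} (hτ : τ ≠ 0) {z : ℂ} (hz : z + I * τ / 2 ≠ 0) :
    Ppoly τ z = 0 ↔ rootMap τ z = z := by
  have hτ2 : I * (τ : ℂ) ^ 2 ≠ 0 := mul_ne_zero I_ne_zero (pow_ne_zero 2 (ofReal_ne_zero.2 hτ))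
  have hident := I_mul_sq_mul_Ppoly hτ z
  rw [rootMap, ← eq_sub_iff_add_eq', div_eq_iff hz, ← mul_right_inj' hτ2, mul_zero]
  constructor <;> intro h <;> linear_combination (-1 : ℂ) * h + hident

theorem norm_one_add_I_div_four_pi_le : ‖1 + I / (4 * π)‖ ≤ 13 / 12 := by
  have hnorm : ‖I / (4 * π)‖ = 1 / (4 * π) := by
    rw [norm_div, norm_I, show (4 * π : ℂ) = ((4 * π : ℝ) : ℂ) by push_cast; ring,
      norm_real, norm_of_nonneg (by positivity)]
  have hpi : 1 / (4 * π) ≤ 1 / 12 := by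
    gcongr
    linarith [pi_gt_three]
  calc ‖1 + I / (4 * π)‖ ≤ ‖(1 : ℂ)‖ + ‖I / (4 * π)‖ := norm_add_le _ _
    _ ≤ 13 / 12 := by rw [norm_one, hnorm]; linarith

theorem norm_Qpoly_le (z : ℂ) : ‖Qpoly z‖ ≤ ‖z‖ * (‖z‖ ^ 2 + 13 / 12 * ‖z‖ + 1 / 4) := by
  have hfactor : Qpoly z = z * (-I * z ^ 2 + (1 + I / (4 * π)) * z + I / 4) := by
    rw [Qpoly]; ring
  rw [hfactor, norm_mul]
  gcongr
  calc ‖-I * z ^ 2 + (1 + I / (4 * π)) * z + I / 4‖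
      ≤ ‖-I * z ^ 2‖ + ‖(1 + I / (4 * π)) * z‖ + ‖I / 4‖ := norm_add₃_le
    _ ≤ ‖z‖ ^ 2 + 13 / 12 * ‖z‖ + 1 / 4 := by
      simp only [norm_mul, norm_neg, norm_I, norm_pow, norm_div, one_mul, Complex.norm_ofNat]
      gcongr
      exact norm_one_add_I_div_four_pi_le

theorem norm_Qpoly_sub_le (z w : ℂ) :
    ‖Qpoly z - Qpoly w‖ ≤
      (‖z‖ ^ 2 + ‖z‖ * ‖w‖ + ‖w‖ ^ 2 + 13 / 12 * (‖z‖ + ‖w‖) + 1 / 4) * ‖z - w‖ := by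
  have hfactor : Qpoly z - Qpoly w =
      (-I * (z ^ 2 + z * w + w ^ 2) + (1 + I / (4 * π)) * (z + w) + I / 4) * (z - w) := by
    simp only [Qpoly]; ring
  rw [hfactor, norm_mul]
  gcongr
  calc ‖-I * (z ^ 2 + z * w + w ^ 2) + (1 + I / (4 * π)) * (z + w) + I / 4‖
      ≤ ‖-I * (z ^ 2 + z * w + w ^ 2)‖ + ‖(1 + I / (4 * π)) * (z + w)‖ + ‖I / 4‖ :=
        norm_add₃_le
    _ ≤ (‖z‖ ^ 2 + ‖z‖ * ‖w‖ + ‖w‖ ^ 2) + 13 / 12 * (‖z‖ + ‖w‖) + 1 / 4 := by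
      simp only [norm_mul, norm_neg, norm_I, norm_div, one_mul, Complex.norm_ofNat]
      gcongr
      · exact (norm_add₃_le).trans_eq (by rw [norm_pow, norm_pow, norm_mul])
      · exact norm_one_add_I_div_four_pi_le
      · exact norm_add_le z w

section Disc

variable {τ : ℝ} {z : ℂ}

theorem norm_I_mul_ofReal_div_two (hτ : 0 ≤ τ) : ‖I * τ / 2‖ = τ / 2 := by
  simp [abs_of_nonneg hτ]

theorem norm_le_of_norm_sub_I_mul_div_two_le (hτ : 0 ≤ τ) (hz : ‖z - I * τ / 2‖ ≤ τ / 10) :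
    ‖z‖ ≤ 3 * τ / 5 := by
  have := norm_sub_norm_le z (I * τ / 2)
  rw [norm_I_mul_ofReal_div_two hτ] at this
  linarith

theorem le_norm_add_I_mul_div_two (hτ : 0 ≤ τ) (hz : ‖z - I * τ / 2‖ ≤ τ / 10) :
    9 * τ / 10 ≤ ‖z + I * τ / 2‖ := by
  have := norm_sub_norm_le (2 * (I * τ / 2)) (z + I * τ / 2)
  rw [show 2 * (I * τ / 2) - (z + I * τ / 2) = -(z - I * τ / 2) by ring, norm_neg, norm_mul,
    norm_I_mul_ofReal_div_two hτ, Complex.norm_ofNat] at this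
  linarith

theorem norm_add_I_mul_div_two_le (hτ : 0 ≤ τ) (hz : ‖z - I * τ / 2‖ ≤ τ / 10) :
    ‖z + I * τ / 2‖ ≤ 11 * τ / 10 := by
  have := norm_add_le (z - I * τ / 2) (2 * (I * τ / 2))
  rw [show z - I * τ / 2 + 2 * (I * τ / 2) = z + I * τ / 2 by ring, norm_mul,
    norm_I_mul_ofReal_div_two hτ, Complex.norm_ofNat] at this
  linarith

end Disc

theorem norm_Qpoly_le_of_norm_le {z : ℂ} (hz : ‖z‖ ≤ 3 / 20) : ‖Qpoly z‖ ≤ 9 / 20 * ‖z‖ := by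
  have hz0 := norm_nonneg z
  nlinarith [norm_Qpoly_le z]

theorem norm_Qpoly_sub_le_of_norm_le {z w : ℂ} (hz : ‖z‖ ≤ 3 / 20) (hw : ‖w‖ ≤ 3 / 20) :
    ‖Qpoly z - Qpoly w‖ ≤ 13 / 20 * ‖z - w‖ := by
  refine (norm_Qpoly_sub_le z w).trans (mul_le_mul_of_nonneg_right ?_ (norm_nonneg _))
  have hz0 := norm_nonneg z
  have hw0 := norm_nonneg w
  nlinarith [mul_le_mul hz hw hw0 (by norm_num)]

theorem rootMap_mapsTo {τ : ℝ} (hτ0 : 0 < τ) (hτ : τ ≤ 1 / 4) :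
    MapsTo (rootMap τ) (closedBall (I * τ / 2) (τ / 10)) (ball (I * τ / 2) (τ / 10)) := by
  intro z hz
  rw [mem_closedBall_iff_norm] at hz
  have hzn := norm_le_of_norm_sub_I_mul_div_two_le hτ0.le hz
  have hQ := norm_Qpoly_le_of_norm_le (hzn.trans (by linarith))
  have hden := le_norm_add_I_mul_div_two hτ0.le hz
  rw [mem_ball_iff_norm, rootMap, add_sub_cancel_left, norm_div, norm_mul, norm_pow, norm_real,
    norm_of_nonneg hτ0.le, div_lt_iff₀ (by linarith)]
  calc τ ^ 2 * ‖Qpoly z‖ ≤ τ ^ 2 * (9 / 20 * (3 * τ / 5)) := by gcongr; linarith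
    _ < τ / 10 * (9 * τ / 10) := by nlinarith
    _ ≤ τ / 10 * ‖z + I * τ / 2‖ := by gcongr

theorem rootMap_sub_rootMap {τ : ℝ} {z w : ℂ} (hz : z + I * τ / 2 ≠ 0) (hw : w + I * τ / 2 ≠ 0) :
    rootMap τ z - rootMap τ w =
      τ ^ 2 * ((Qpoly z - Qpoly w) * (w + I * τ / 2) - Qpoly w * (z - w)) /
        ((z + I * τ / 2) * (w + I * τ / 2)) := by
  rw [rootMap, rootMap, add_sub_add_left_eq_sub, div_sub_div _ _ hz hw]
  ring

theorem rootMap_lipschitzOnWith {τ : ℝ} (hτ0 : 0 < τ) (hτ : τ ≤ 1 / 4) :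
    LipschitzOnWith (1 / 2) (rootMap τ) (closedBall (I * τ / 2) (τ / 10)) := by
  refine LipschitzOnWith.of_dist_le_mul fun z hz w hw => ?_
  rw [mem_closedBall_iff_norm] at hz hw
  rw [dist_eq_norm, dist_eq_norm, NNReal.coe_div, NNReal.coe_one]
  set a : ℂ := I * τ / 2
  have hzn := norm_le_of_norm_sub_I_mul_div_two_le hτ0.le hz
  have hwn := norm_le_of_norm_sub_I_mul_div_two_le hτ0.le hw
  have hza := le_norm_add_I_mul_div_two hτ0.le hz
  have hwa := le_norm_add_I_mul_div_two hτ0.le hw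
  have hza0 : z + a ≠ 0 := norm_pos_iff.1 (by linarith)
  have hwa0 : w + a ≠ 0 := norm_pos_iff.1 (by linarith)
  have hnum : ‖(Qpoly z - Qpoly w) * (w + a) - Qpoly w * (z - w)‖ ≤ 197 / 200 * τ * ‖z - w‖ :=
    calc ‖(Qpoly z - Qpoly w) * (w + a) - Qpoly w * (z - w)‖
        ≤ ‖Qpoly z - Qpoly w‖ * ‖w + a‖ + ‖Qpoly w‖ * ‖z - w‖ := by
          rw [← norm_mul, ← norm_mul]; exact norm_sub_le _ _
      _ ≤ 13 / 20 * ‖z - w‖ * (11 * τ / 10) + 9 / 20 * (3 * τ / 5) * ‖z - w‖ := by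
          gcongr
          · exact norm_Qpoly_sub_le_of_norm_le (hzn.trans (by linarith)) (hwn.trans (by linarith))
          · exact norm_add_I_mul_div_two_le hτ0.le hw
          · exact (norm_Qpoly_le_of_norm_le (hwn.trans (by linarith))).trans (by gcongr)
      _ = 197 / 200 * τ * ‖z - w‖ := by ring
  rw [rootMap_sub_rootMap hza0 hwa0, norm_div, norm_mul, norm_mul, norm_pow, norm_real,
    norm_of_nonneg hτ0.le, div_le_iff₀ (by positivity)]
  calc τ ^ 2 * ‖(Qpoly z - Qpoly w) * (w + a) - Qpoly w * (z - w)‖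
      ≤ τ ^ 2 * (197 / 200 * τ * ‖z - w‖) := by gcongr
    _ ≤ 1 / 2 * ‖z - w‖ * (9 * τ / 10 * (9 * τ / 10)) := by
        have := norm_nonneg (z - w)
        nlinarith [mul_nonneg (sq_nonneg τ) this]
    _ ≤ 1 / 2 * ‖z - w‖ * (‖z + a‖ * ‖w + a‖) := by gcongr

theorem statement5 (τ : ℝ) (hτ0 : 0 < τ) (hτ : τ ≤ 1 / 4) :
    ∃! z : ℂ, ‖z - Complex.I * (τ : ℂ) / 2‖ < τ / 10 ∧ Ppoly τ z = 0 := by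
  have hfix := existsUnique_fixedPoint_mem_ball (by positivity) (by norm_num)
    (rootMap_mapsTo hτ0 hτ) (rootMap_lipschitzOnWith hτ0 hτ)
  refine (existsUnique_congr fun z => ?_).1 hfix
  rw [mem_ball_iff_norm, and_congr_right_iff]
  intro hz
  have hden := le_norm_add_I_mul_div_two hτ0.le hz.le
  exact (Ppoly_eq_zero_iff_rootMap_eq hτ0.ne' (norm_pos_iff.1 (by linarith))).symm
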